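/- Let $X$ be a predual of $\ell_1$ such that all $\sigma(\ell_1, X)$-limit points of $\mathrm{ext}\,B_{\ell_1}$ lie in $rB_{\ell_1}$ for some $0 \le r < 1$. Let $Y$ be a Banach space and $A: X \to Y$ an isomorphism with $\|A\|\,\|A^{-1}\| < \frac{2}{1+r}$. Then for every convex $w^*$-compact $K \subset Y^*$, every nonexpansive $T: K \to K$ has a fixed point. -/

import Mathlib

open Filter Topology ENNReal NormedSpace

noncomputable section

instance : Fact ((1:ℝ≥0∞) ≤ 1) := ⟨le_rfl⟩

/-- The space `ℓ₁` of absolutely summable real sequences. -/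
abbrev ell1 : Type := lp (fun _ : ℕ => ℝ) 1

/-- The standard unit vector basis of `ℓ₁`. -/
def basisv (i : ℕ) : ell1 := lp.single 1 i (1:ℝ)

/-- The weak-star topology `σ(ℓ₁, X)` on `ℓ₁` induced by a predual `X` via an
isometric identification `e` of the dual of `X` with `ℓ₁`. -/
def wstar (X : Type*) [NormedAddCommGroup X] [NormedSpace ℝ X]
    (e : StrongDual ℝ X ≃ₗᵢ[ℝ] ell1) : TopologicalSpace ell1 :=
  TopologicalSpace.induced (fun y => StrongDual.toWeakDual (e.symm y)) inferInstance

/-- The weak-star topology `σ(Y*, Y)` on the dual of a normed space `Y`. -/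
def wsDual (Y : Type*) [NormedAddCommGroup Y] [NormedSpace ℝ Y] :
    TopologicalSpace (StrongDual ℝ Y) :=
  TopologicalSpace.induced (fun φ : StrongDual ℝ Y => StrongDual.toWeakDual φ)
    inferInstance

/-!
Choose approximate fixed points `φ k` of `T` in a closed convex `T`-invariant `W ⊆ K` and pass
to an ultrafilter. Read in `ℓ₁` through `J := e ∘ A*`, the sequence `J (φ k)` is a coordinatewise
limit `η` plus a part tending to zero coordinatewise, of norm tending to some `c`; in `ℓ₁` this
forces `‖w - J (φ k)‖ → ‖w - η‖ + c` for every `w`. The hypothesis on the limit points of `±eᵢ`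
bounds weak-star limits of such vanishing parts by `r c`, so a weak-star cluster point `φL ∈ K`
of `φ k` has `‖J φL - η‖ ≤ r c`. Hence the sublevel set
`W' = {ψ ∈ K | lim ‖φ k - ψ‖ ≤ ‖A⁻¹‖ (1 + r) c}` contains `φL`, is again closed, convex and
`T`-invariant, and `J W'` lies in the ball of radius `(‖A‖ ‖A⁻¹‖ (1 + r) - 1) c` about `η`.
Since `‖A‖ ‖A⁻¹‖ (1 + r) - 1 < 1`, iterating shrinks these radii geometrically; approximate fixed
points chosen in the successive sets form a Cauchy sequence, and its limit is fixed by `T`.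
-/

open Set Metric

lemma Ultrafilter.exists_tendsto_of_abs_le {ι : Type*} (U : Ultrafilter ι) {f : ι → ℝ} {C : ℝ}
    (hf : ∀ k, |f k| ≤ C) : ∃ L, Tendsto f U (𝓝 L) := by
  obtain ⟨L, -, hfL⟩ := (isCompact_Icc (a := -C) (b := C)).ultrafilter_le_nhds (U.map f)
    (le_principal_iff.2 (Filter.mem_map.2 (Eventually.of_forall fun k => abs_le.1 (hf k))))
  exact ⟨L, hfL⟩

namespace ell1

lemma norm_eq_tsum_abs (f : ell1) : ‖f‖ = ∑' i, |f i| := by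
  simp [lp.norm_eq_tsum_rpow (by norm_num : 0 < (1 : ℝ≥0∞).toReal)]

lemma summable_abs (f : ell1) : Summable fun i => |f i| := by
  simpa using (lp.memℓp f).summable (by norm_num : 0 < (1 : ℝ≥0∞).toReal)

lemma abs_apply_le_norm (f : ell1) (i : ℕ) : |f i| ≤ ‖f‖ :=
  lp.norm_apply_le_norm one_ne_zero f i

lemma tendsto_norm_sub_of_tendsto_apply {ι : Type*} {L : Filter ι} {v : ι → ell1} {η : ell1}
    {c : ℝ} (hv : ∀ i, Tendsto (fun k => v k i) L (𝓝 (η i)))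
    (hc : Tendsto (fun k => ‖v k - η‖) L (𝓝 c)) (w : ell1) :
    Tendsto (fun k => ‖w - v k‖) L (𝓝 (‖w - η‖ + c)) := by
  set a := w - η
  set ζ := fun k => v k - η
  have hζ : ∀ i, Tendsto (fun k => ζ k i) L (𝓝 0) := fun i => by
    simpa [ζ] using (hv i).sub_const (η i)
  have hsplit : ∀ k, ‖a - ζ k‖ - ‖ζ k‖ = ∑' i, (|a i - ζ k i| - |ζ k i|) := fun k => by
    rw [norm_eq_tsum_abs, norm_eq_tsum_abs, ← (summable_abs _).tsum_sub (summable_abs _)]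
    rfl
  have hdiff : Tendsto (fun k => ‖a - ζ k‖ - ‖ζ k‖) L (𝓝 ‖a‖) := by
    simp only [hsplit, norm_eq_tsum_abs a]
    refine tendsto_tsum_of_dominated_convergence (summable_abs a) (fun i => ?_)
      (Eventually.of_forall fun k i => ?_)
    · simpa using ((hζ i).const_sub (a i)).abs.sub (hζ i).abs
    · simpa [Real.norm_eq_abs] using abs_abs_sub_abs_le_abs_sub (a i - ζ k i) (-ζ k i)
  convert hdiff.add hc using 2 with k
  simp [a, ζ]

lemma exists_tendsto_apply_and_tendsto_norm_sub {ι : Type*} (U : Ultrafilter ι) {v : ι → ell1}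
    {C : ℝ} (hv : ∀ k, ‖v k‖ ≤ C) :
    ∃ (η : ell1) (c : ℝ), (∀ i, Tendsto (fun k => v k i) U (𝓝 (η i))) ∧
      Tendsto (fun k => ‖v k - η‖) U (𝓝 c) := by
  choose η hη using fun i =>
    U.exists_tendsto_of_abs_le fun k => (abs_apply_le_norm (v k) i).trans (hv k)
  have hη1 : Memℓp η 1 := memℓp_gen' (C := C) fun s => by
    have hsum : Tendsto (fun k => ∑ i ∈ s, |v k i|) U (𝓝 (∑ i ∈ s, |η i|)) :=
      tendsto_finsetSum s fun i _ => (hη i).abs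
    refine le_of_tendsto' (by simpa using hsum) fun k => ?_
    calc ∑ i ∈ s, |v k i| ≤ ‖v k‖ := by
          rw [norm_eq_tsum_abs]; exact (summable_abs _).sum_le_tsum s fun i _ => abs_nonneg _
      _ ≤ C := hv k
  obtain ⟨c, hc⟩ := U.exists_tendsto_of_abs_le (f := fun k => ‖v k - ⟨η, hη1⟩‖)
    (C := C + ‖(⟨η, hη1⟩ : ell1)‖) fun k => by
      rw [abs_of_nonneg (norm_nonneg _)]
      exact (norm_sub_le _ _).trans (by linarith [hv k])
  exact ⟨⟨η, hη1⟩, c, hη, hc⟩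

end ell1

section Predual

variable {X : Type*} [NormedAddCommGroup X] [NormedSpace ℝ X] (e : StrongDual ℝ X ≃ₗᵢ[ℝ] ell1)

lemma norm_basisv (i : ℕ) : ‖basisv i‖ = 1 := by
  simp [basisv, lp.norm_single (E := fun _ : ℕ => ℝ) (p := 1) one_pos i (1 : ℝ)]

lemma basisv_injective : Function.Injective basisv := fun i j h => by
  simpa [basisv, lp.single_apply, Pi.single_apply] using congrArg (fun f : ell1 => f i) h

lemma hasSum_symm_apply (z : ell1) (x : X) :
    HasSum (fun i => z i * e.symm (basisv i) x) (e.symm z x) := by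
  have hz : HasSum (fun i => z i • basisv i) z := by
    convert lp.hasSum_single one_ne_top z using 2 with i
    ext j
    by_cases h : j = i <;> simp [basisv, lp.single_apply, h]
  simpa using ((ContinuousLinearMap.apply ℝ ℝ x).comp
    (e.symm : ell1 →L[ℝ] StrongDual ℝ X)).hasSum hz

lemma abs_symm_apply_le {z : ell1} {x : X} {I : ℕ} {s : ℝ}
    (hs : ∀ i, I ≤ i → |e.symm (basisv i) x| ≤ s) :
    |e.symm z x| ≤ ‖x‖ * ∑ i ∈ Finset.range I, |z i| + s * ‖z‖ := by
  have hs0 : 0 ≤ s := (abs_nonneg _).trans (hs I le_rfl)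
  have hhead : HasSum (fun i => if i < I then |z i| else 0) (∑ i ∈ Finset.range I, |z i|) := by
    have h : HasSum (fun i => if i < I then |z i| else 0)
        (∑ i ∈ Finset.range I, if i < I then |z i| else 0) :=
      hasSum_sum_of_ne_finset_zero fun i hi => if_neg (by simpa using hi)
    rwa [Finset.sum_congr rfl fun i hi => if_pos (Finset.mem_range.1 hi)] at h
  have hnorm : HasSum (fun i => |z i|) ‖z‖ := by
    rw [ell1.norm_eq_tsum_abs]; exact (ell1.summable_abs z).hasSum
  refine (hasSum_symm_apply e z x).norm_le_of_bounded ((hhead.mul_left ‖x‖).add (hnorm.mul_left s))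
    fun i => ?_
  have hb : |e.symm (basisv i) x| ≤ ‖x‖ := by
    simpa [norm_basisv] using (e.symm (basisv i)).le_opNorm x
  rw [Real.norm_eq_abs, abs_mul]
  split_ifs with hi
  · nlinarith [abs_nonneg (z i)]
  · nlinarith [abs_nonneg (z i), hs i (not_lt.1 hi)]

def BasisPairingLimsupLE (r : ℝ) : Prop :=
  ∀ (x : X) (s : ℝ), r * ‖x‖ < s → ∀ᶠ i in atTop, |e.symm (basisv i) x| ≤ s

lemma norm_le_mul_of_tendsto_apply {r c : ℝ} (hr : 0 ≤ r)
    (hbasis : BasisPairingLimsupLE e r)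
    {ι : Type*} {L : Filter ι} [L.NeBot] {ζ : ι → ell1} {ξ : StrongDual ℝ X}
    (hζ : ∀ i, Tendsto (fun k => ζ k i) L (𝓝 0)) (hc : Tendsto (fun k => ‖ζ k‖) L (𝓝 c))
    (hξ : ∀ x, Tendsto (fun k => e.symm (ζ k) x) L (𝓝 (ξ x))) : ‖ξ‖ ≤ r * c := by
  have hc0 : 0 ≤ c := ge_of_tendsto' hc fun k => norm_nonneg _
  refine ContinuousLinearMap.opNorm_le_bound _ (mul_nonneg hr hc0) fun x => ?_
  have hs : ∀ s, r * ‖x‖ < s → |ξ x| ≤ s * c := fun s hs => by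
    obtain ⟨I, hI⟩ := eventually_atTop.1 (hbasis x s hs)
    have hhead : Tendsto (fun k => ∑ i ∈ Finset.range I, |ζ k i|) L (𝓝 0) := by
      simpa using tendsto_finsetSum _ fun i _ => (hζ i).abs
    refine le_of_tendsto_of_tendsto' (hξ x).abs ?_ fun k => abs_symm_apply_le e hI
    simpa using (hhead.const_mul ‖x‖).add (hc.const_mul s)
  have hcont : Tendsto (fun s => s * c) (𝓝[>] (r * ‖x‖)) (𝓝 (r * ‖x‖ * c)) :=
    ((continuous_mul_const c).tendsto _).mono_left nhdsWithin_le_nhds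
  rw [Real.norm_eq_abs, mul_right_comm]
  exact ge_of_tendsto hcont (eventually_nhdsWithin_of_forall hs)

lemma basisPairingLimsupLE_of_limitPoints_norm_le {r : ℝ}
    (hlim : ∀ y : ell1,
      y ∈ @closure _ (wstar X e) ({z : ell1 | ∃ i, z = basisv i ∨ z = -basisv i} \ {y}) →
      ‖y‖ ≤ r) :
    BasisPairingLimsupLE e r := by
  intro x s hs
  -- A weak-star accumulation point of the `eᵢ` pairing with `x` to more than `s` in absolute
  -- value would have norm at most `r` and still pair with `x` to at least `s`.
  by_contra hbad
  have hBad : {i | s < |e.symm (basisv i) x|}.Infinite := by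
    simpa using Nat.frequently_atTop_iff_infinite.1 (not_eventually.1 hbad)
  set g : ell1 → WeakDual ℝ X := fun z => StrongDual.toWeakDual (e.symm z)
  have hg : Function.Injective g := fun y z h => e.symm.injective h
  obtain ⟨w, -, hw⟩ := (WeakDual.isCompact_closedBall (0 : StrongDual ℝ X) 1)
    |>.isCountablyCompact.exists_accPt_of_infinite
      (B := g '' (basisv '' {i | s < |e.symm (basisv i) x|}))
      (by rintro _ ⟨_, ⟨i, -, rfl⟩, rfl⟩; simp [g, norm_basisv])
      ((hBad.image basisv_injective.injOn).image hg.injOn)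
  set y := e (WeakDual.toStrongDual w)
  have hgy : g y = w := by simp [g, y]
  have hy : ‖y‖ ≤ r := by
    refine hlim y (closure_induced.2 ?_)
    change g y ∈ closure (g '' _)
    rw [hgy]
    refine closure_mono ?_ (mem_closure_iff_clusterPt.2 (accPt_principal_iff_clusterPt.1 hw))
    rintro _ ⟨⟨_, ⟨i, -, rfl⟩, rfl⟩, hne⟩
    exact ⟨basisv i, ⟨⟨i, Or.inl rfl⟩, fun h => hne (h ▸ hgy)⟩, rfl⟩
  have hwx : s ≤ |w x| := by
    have hcl : IsClosed {ψ : WeakDual ℝ X | s ≤ |ψ x|} :=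
      isClosed_le continuous_const (WeakDual.eval_continuous x).abs
    refine hcl.closure_subset_iff.2 ?_ (mem_closure_iff_clusterPt.2 hw.clusterPt)
    rintro _ ⟨_, ⟨i, hi, rfl⟩, rfl⟩
    exact le_of_lt (show s < |e.symm (basisv i) x| from hi)
  have hwy : |w x| ≤ r * ‖x‖ := by
    calc |w x| = |e.symm y x| := by rw [← hgy]; rfl
      _ ≤ ‖e.symm y‖ * ‖x‖ := (e.symm y).le_opNorm x
      _ ≤ r * ‖x‖ := by rw [e.symm.norm_map]; gcongr
  linarith

end Predual

section WeakStarCompact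

variable {Y : Type*} [NormedAddCommGroup Y] [NormedSpace ℝ Y] {K : Set (StrongDual ℝ Y)}

lemma isCompact_toWeakDual_image (hK : @IsCompact _ (wsDual Y) K) :
    IsCompact (StrongDual.toWeakDual '' K) :=
  @IsCompact.image _ _ (wsDual Y) _ _ _ hK continuous_induced_dom

lemma isBounded_of_isCompact_wsDual [CompleteSpace Y] (hK : @IsCompact _ (wsDual Y) K) :
    Bornology.IsBounded K := by
  have h := WeakDual.isBounded_iff_isVonNBounded.2 ((isCompact_toWeakDual_image hK).isVonNBounded ℝ)
  rwa [← WeakDual.isBounded_toWeakDual_preimage_iff_isBounded,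
    StrongDual.toWeakDual.injective.preimage_image] at h

lemma isClosed_of_isCompact_wsDual (hK : @IsCompact _ (wsDual Y) K) : IsClosed K := by
  have h := (isCompact_toWeakDual_image hK).isClosed.preimage
    NormedSpace.Dual.toWeakDual_continuous
  rwa [StrongDual.toWeakDual.injective.preimage_image] at h

lemma exists_tendsto_apply_of_isCompact_wsDual (hK : @IsCompact _ (wsDual Y) K) {ι : Type*}
    (U : Ultrafilter ι) {φ : ι → StrongDual ℝ Y} (hφ : ∀ k, φ k ∈ K) :
    ∃ φL ∈ K, ∀ y, Tendsto (fun k => φ k y) U (𝓝 (φL y)) := by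
  obtain ⟨_, ⟨φL, hφL, rfl⟩, hlim⟩ := (isCompact_toWeakDual_image hK).ultrafilter_le_nhds
    (U.map fun k => StrongDual.toWeakDual (φ k))
    (le_principal_iff.2 <| Filter.mem_map.2 <|
      Eventually.of_forall fun k => mem_image_of_mem _ (hφ k))
  exact ⟨φL, hφL, fun y => ((WeakDual.eval_continuous y).tendsto _).comp hlim⟩

end WeakStarCompact

section Nonexpansive

variable {E : Type*} [NormedAddCommGroup E] [NormedSpace ℝ E] {K W : Set E} {T : E → E}

structure IsClosedConvexInvariant (K : Set E) (T : E → E) (W : Set E) : Prop where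
  subset : W ⊆ K
  nonempty : W.Nonempty
  convex : Convex ℝ W
  isClosed : IsClosed W
  mapsTo : MapsTo T W W

lemma IsClosedConvexInvariant.exists_norm_sub_le [CompleteSpace E]
    (hW : IsClosedConvexInvariant K T W) (hK : Bornology.IsBounded K)
    (hlip : LipschitzOnWith 1 T K) {ε : ℝ} (hε : 0 < ε) : ∃ ψ ∈ W, ‖ψ - T ψ‖ ≤ ε := by
  obtain ⟨w₀, hw₀⟩ := hW.nonempty
  have hd : 0 ≤ diam W := diam_nonneg
  set δ := ε / (diam W + ε)
  have hδ0 : 0 < δ := by positivity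
  have hδ1 : δ ≤ 1 := div_le_one_of_le₀ (by linarith) (by positivity)
  set S : E → E := fun ψ => δ • w₀ + (1 - δ) • T ψ
  have hS : MapsTo S W W := fun ψ hψ =>
    hW.convex hw₀ (hW.mapsTo hψ) hδ0.le (by linarith) (by ring)
  have ht0 : 0 ≤ 1 - δ := by linarith
  set t : NNReal := ⟨1 - δ, ht0⟩
  have hSlip : LipschitzOnWith t S W := LipschitzOnWith.of_dist_le_mul fun x hx y hy => by
    simp only [S, dist_add_left, dist_smul₀, Real.norm_eq_abs, abs_of_nonneg ht0]
    exact mul_le_mul_of_nonneg_left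
      (by simpa using (hlip.mono hW.subset).dist_le_mul x hx y hy) ht0
  obtain ⟨ψ, hψW, hψ, -⟩ := ContractingWith.exists_fixedPoint' hW.isClosed.isComplete hS
    ⟨show t < 1 from NNReal.coe_lt_coe.1 (show 1 - δ < 1 by linarith), hSlip.mapsToRestrict hS⟩ hw₀
    (edist_ne_top _ _)
  have hψeq : ψ - T ψ = δ • (w₀ - T ψ) := by
    calc ψ - T ψ = S ψ - T ψ := by rw [hψ]
      _ = δ • (w₀ - T ψ) := by simp only [S]; module
  refine ⟨ψ, hψW, ?_⟩
  calc ‖ψ - T ψ‖ = δ * dist w₀ (T ψ) := by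
        rw [hψeq, norm_smul, Real.norm_eq_abs, abs_of_pos hδ0, dist_eq_norm]
    _ ≤ δ * diam W := by
        gcongr; exact dist_le_diam_of_mem (hK.subset hW.subset) hw₀ (hW.mapsTo hψW)
    _ ≤ ε := by
        rw [div_mul_eq_mul_div, div_le_iff₀ (by positivity)]; nlinarith

end Nonexpansive

lemma exists_fixedPoint_of_cauchySeq {M : Type*} [MetricSpace M] [CompleteSpace M] {K : Set M}
    {T : M → M} (hK : IsClosed K) (hlip : LipschitzOnWith 1 T K) {χ : ℕ → M}
    (hχK : ∀ j, χ j ∈ K) (hχ : CauchySeq χ)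
    (happrox : Tendsto (fun j => dist (χ j) (T (χ j))) atTop (𝓝 0)) : ∃ x ∈ K, T x = x := by
  obtain ⟨x, hx⟩ := cauchySeq_tendsto_of_complete hχ
  have hxK : x ∈ K := hK.mem_of_tendsto hx (Eventually.of_forall hχK)
  have hTx : Tendsto (fun j => T (χ j)) atTop (𝓝 (T x)) :=
    (hlip.continuousOn x hxK).tendsto.comp (tendsto_nhdsWithin_iff.2 ⟨hx, Eventually.of_forall hχK⟩)
  have hTx' : Tendsto (fun j => T (χ j)) atTop (𝓝 x) :=
    tendsto_of_tendsto_of_dist hx happrox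
  exact ⟨x, hxK, tendsto_nhds_unique hTx hTx'⟩

lemma exists_seq_of_forall_exists {α : Type*} {p : α → Prop} {R : α → α → Prop} {a : α}
    (ha : p a) (h : ∀ a, p a → ∃ b, p b ∧ R a b) :
    ∃ f : ℕ → α, ∀ n, p (f n) ∧ R (f n) (f (n + 1)) := by
  choose g hg using h
  let f : ℕ → {x // p x} := fun n => Nat.rec ⟨a, ha⟩ (fun _ x => ⟨g x.1 x.2, (hg x.1 x.2).1⟩) n
  exact ⟨fun n => (f n).1, fun n => ⟨(f n).2, (hg _ _).2⟩⟩

lemma cauchySeq_of_antilipschitzWith {E F : Type*} [PseudoMetricSpace E] [PseudoMetricSpace F]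
    {J : E → F} {β : NNReal} (hJ : AntilipschitzWith β J) {κ : ℝ} (hκ0 : 0 ≤ κ) (hκ1 : κ < 1)
    {χ : ℕ → E} {η : ℕ → F} {G : ℕ → ℝ} (hχ : ∀ j, dist (J (χ j)) (η j) ≤ G j)
    (hη : ∀ j, dist (η j) (η (j + 1)) ≤ G j) (hG : ∀ j, G (j + 1) ≤ κ * G j) : CauchySeq χ := by
  have hG0 : ∀ j, 0 ≤ G j := fun j => dist_nonneg.trans (hχ j)
  have hGgeom : ∀ j, G j ≤ G 0 * κ ^ j := by
    intro j
    induction j with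
    | zero => simp
    | succ j ih =>
      calc G (j + 1) ≤ κ * G j := hG j
        _ ≤ κ * (G 0 * κ ^ j) := by gcongr
        _ = G 0 * κ ^ (j + 1) := by ring
  refine cauchySeq_of_le_geometric κ (3 * β * G 0) hκ1 fun j => ?_
  have hJχ : dist (J (χ j)) (J (χ (j + 1))) ≤ 3 * G j := by
    calc dist (J (χ j)) (J (χ (j + 1)))
        ≤ dist (J (χ j)) (η j) + dist (η j) (η (j + 1)) + dist (η (j + 1)) (J (χ (j + 1))) :=
          dist_triangle4 _ _ _ _
      _ ≤ G j + G j + G (j + 1) := by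
          rw [dist_comm (η (j + 1))]; gcongr; exacts [hχ j, hη j, hχ (j + 1)]
      _ ≤ 3 * G j := by nlinarith [hG j, hG0 j]
  calc dist (χ j) (χ (j + 1)) ≤ β * dist (J (χ j)) (J (χ (j + 1))) := hJ.le_mul_dist _ _
    _ ≤ β * (3 * (G 0 * κ ^ j)) := by gcongr; exact hJχ.trans (by gcongr; exact hGgeom j)
    _ = 3 * β * G 0 * κ ^ j := by ring

section AsymptoticDist

variable {E : Type*} [NormedAddCommGroup E] {ι : Type*}

def asymptoticDist (U : Ultrafilter ι) (φ : ι → E) (ψ : E) : ℝ :=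
  limUnder (U : Filter ι) fun k => ‖φ k - ψ‖

variable {U : Ultrafilter ι} {φ : ι → E} {C : ℝ}

lemma tendsto_asymptoticDist (hφ : ∀ k, ‖φ k‖ ≤ C) (ψ : E) :
    Tendsto (fun k => ‖φ k - ψ‖) U (𝓝 (asymptoticDist U φ ψ)) := by
  obtain ⟨L, hL⟩ :=
    U.exists_tendsto_of_abs_le (f := fun k => ‖φ k - ψ‖) (C := C + ‖ψ‖) fun k => by
    rw [abs_of_nonneg (norm_nonneg _)]; exact (norm_sub_le (φ k) ψ).trans (by linarith [hφ k])
  exact tendsto_nhds_limUnder ⟨L, hL⟩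

lemma lipschitzWith_asymptoticDist (hφ : ∀ k, ‖φ k‖ ≤ C) :
    LipschitzWith 1 (asymptoticDist U φ) :=
  LipschitzWith.of_dist_le_mul fun ψ ψ' => by
    rw [NNReal.coe_one, one_mul, Real.dist_eq, dist_eq_norm]
    refine le_of_tendsto (((tendsto_asymptoticDist hφ ψ).sub
      (tendsto_asymptoticDist hφ ψ')).abs) (Eventually.of_forall fun k => ?_)
    simpa [norm_sub_rev ψ'] using abs_norm_sub_norm_le (φ k - ψ) (φ k - ψ')

lemma convexOn_asymptoticDist [NormedSpace ℝ E] (hφ : ∀ k, ‖φ k‖ ≤ C) :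
    ConvexOn ℝ univ (asymptoticDist U φ) := by
  refine ⟨convex_univ, fun ψ _ ψ' _ a b ha hb hab => ?_⟩
  refine le_of_tendsto_of_tendsto' (tendsto_asymptoticDist hφ _)
    (((tendsto_asymptoticDist hφ ψ).const_mul a).add ((tendsto_asymptoticDist hφ ψ').const_mul b))
    fun k => ?_
  calc ‖φ k - (a • ψ + b • ψ')‖ = ‖a • (φ k - ψ) + b • (φ k - ψ')‖ := by
        congr 1; rw [smul_sub, smul_sub, ← add_sub_add_comm, ← add_smul, hab, one_smul]
    _ ≤ a * ‖φ k - ψ‖ + b * ‖φ k - ψ'‖ := by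
        simpa [norm_smul, abs_of_nonneg ha, abs_of_nonneg hb] using
          norm_add_le (a • (φ k - ψ)) (b • (φ k - ψ'))

variable {K : Set E} {T : E → E}

lemma asymptoticDist_map_le (hφ : ∀ k, ‖φ k‖ ≤ C) (hφK : ∀ k, φ k ∈ K)
    (hlip : LipschitzOnWith 1 T K) (happrox : Tendsto (fun k => ‖φ k - T (φ k)‖) U (𝓝 0))
    {ψ : E} (hψ : ψ ∈ K) : asymptoticDist U φ (T ψ) ≤ asymptoticDist U φ ψ := by
  refine le_of_tendsto_of_tendsto' (tendsto_asymptoticDist hφ _)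
    (by simpa using happrox.add (tendsto_asymptoticDist hφ ψ)) fun k => ?_
  calc ‖φ k - T ψ‖ ≤ ‖φ k - T (φ k)‖ + ‖T (φ k) - T ψ‖ :=
        norm_sub_le_norm_sub_add_norm_sub (φ k) (T (φ k)) (T ψ)
    _ ≤ ‖φ k - T (φ k)‖ + ‖φ k - ψ‖ := by
        gcongr; simpa [dist_eq_norm] using hlip.dist_le_mul _ (hφK k) _ hψ

lemma isClosedConvexInvariant_asymptoticDist_le [NormedSpace ℝ E] (hK : IsClosed K)
    (hKconv : Convex ℝ K)
    (hKT : MapsTo T K K) (hlip : LipschitzOnWith 1 T K) (hφ : ∀ k, ‖φ k‖ ≤ C)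
    (hφK : ∀ k, φ k ∈ K) (happrox : Tendsto (fun k => ‖φ k - T (φ k)‖) U (𝓝 0)) {ψ₀ : E}
    (hψ₀ : ψ₀ ∈ K) {R : ℝ} (hR : asymptoticDist U φ ψ₀ ≤ R) :
    IsClosedConvexInvariant K T {ψ ∈ K | asymptoticDist U φ ψ ≤ R} where
  subset := sep_subset K _
  nonempty := ⟨ψ₀, hψ₀, hR⟩
  convex := ((convexOn_asymptoticDist hφ).subset (subset_univ K) hKconv).convex_le R
  isClosed := hK.inter (isClosed_le (lipschitzWith_asymptoticDist hφ).continuous continuous_const)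
  mapsTo := fun _ hψ => ⟨hKT hψ.1, (asymptoticDist_map_le hφ hφK hlip happrox hψ.1).trans hψ.2⟩

end AsymptoticDist

section Adjoint

variable {X : Type*} [NormedAddCommGroup X] [NormedSpace ℝ X] (e : StrongDual ℝ X ≃ₗᵢ[ℝ] ell1)
  {Y : Type*} [NormedAddCommGroup Y] [NormedSpace ℝ Y] (A : X ≃L[ℝ] Y)

/-- The adjoint `A* : Y* → X*`, read in `ℓ₁` through `e`. -/
def ell1Adjoint : StrongDual ℝ Y →L[ℝ] ell1 :=
  (e : StrongDual ℝ X →L[ℝ] ell1).comp ((ContinuousLinearMap.compL ℝ X Y ℝ).flip A)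

lemma symm_ell1Adjoint_apply (ψ : StrongDual ℝ Y) (x : X) :
    e.symm (ell1Adjoint e A ψ) x = ψ (A x) := by
  simp [ell1Adjoint]

lemma norm_ell1Adjoint_le (ψ : StrongDual ℝ Y) :
    ‖ell1Adjoint e A ψ‖ ≤ ‖(A : X →L[ℝ] Y)‖ * ‖ψ‖ := by
  simpa [ell1Adjoint, mul_comm] using ψ.opNorm_comp_le (A : X →L[ℝ] Y)

lemma antilipschitz_ell1Adjoint :
    AntilipschitzWith ‖(A.symm : Y →L[ℝ] X)‖₊ (ell1Adjoint e A) :=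
  ContinuousLinearMap.antilipschitz_of_bound _ fun ψ => by
    have h : ψ = (ψ.comp (A : X →L[ℝ] Y)).comp (A.symm : Y →L[ℝ] X) := by ext; simp
    calc ‖ψ‖ ≤ ‖ψ.comp (A : X →L[ℝ] Y)‖ * ‖(A.symm : Y →L[ℝ] X)‖ := by
          conv_lhs => rw [h]
          exact ContinuousLinearMap.opNorm_comp_le _ _
      _ = _ := by simp [ell1Adjoint, mul_comm]

end Adjoint

section Shrink

variable {X : Type*} [NormedAddCommGroup X] [NormedSpace ℝ X] (e : StrongDual ℝ X ≃ₗᵢ[ℝ] ell1)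
  {Y : Type*} [NormedAddCommGroup Y] [NormedSpace ℝ Y] (A : X ≃L[ℝ] Y) {r : ℝ}

lemma norm_ell1Adjoint_sub_le_of_tendsto (hr : 0 ≤ r)
    (hbasis : BasisPairingLimsupLE e r)
    {ι : Type*} {U : Ultrafilter ι} {φ : ι → StrongDual ℝ Y} {φL : StrongDual ℝ Y} {η : ell1}
    {c : ℝ} (hφL : ∀ y, Tendsto (fun k => φ k y) U (𝓝 (φL y)))
    (hη : ∀ i, Tendsto (fun k => ell1Adjoint e A (φ k) i) U (𝓝 (η i)))
    (hc : Tendsto (fun k => ‖ell1Adjoint e A (φ k) - η‖) U (𝓝 c)) :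
    ‖ell1Adjoint e A φL - η‖ ≤ r * c := by
  rw [← e.symm.norm_map]
  refine norm_le_mul_of_tendsto_apply e hr hbasis (ζ := fun k => ell1Adjoint e A (φ k) - η)
    (fun i => by simpa using (hη i).sub_const (η i)) hc fun x => ?_
  simpa [symm_ell1Adjoint_apply] using (hφL (A x)).sub_const (e.symm η x)

lemma exists_mapsTo_smaller_closedBall [CompleteSpace Y] (hr : 0 ≤ r)
    (hbasis : BasisPairingLimsupLE e r)
    {K : Set (StrongDual ℝ Y)} {T : StrongDual ℝ Y → StrongDual ℝ Y}
    (hK : @IsCompact _ (wsDual Y) K) (hKconv : Convex ℝ K) (hKT : MapsTo T K K)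
    (hlip : LipschitzOnWith 1 T K) {W : Set (StrongDual ℝ Y)}
    (hW : IsClosedConvexInvariant K T W) {η : ell1} {G : ℝ}
    (hWG : MapsTo (ell1Adjoint e A) W (closedBall η G)) :
    ∃ W' η' c, IsClosedConvexInvariant K T W' ∧
      MapsTo (ell1Adjoint e A) W'
        (closedBall η' ((‖(A : X →L[ℝ] Y)‖ * ‖(A.symm : Y →L[ℝ] X)‖ * (1 + r) - 1) * c)) ∧
      0 ≤ c ∧ c + dist η η' ≤ G := by
  set J := ell1Adjoint e A
  set α := ‖(A : X →L[ℝ] Y)‖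
  set β := ‖(A.symm : Y →L[ℝ] X)‖
  have hKbdd := isBounded_of_isCompact_wsDual hK
  obtain ⟨B, hB⟩ := hKbdd.exists_norm_le
  set U := Ultrafilter.of (atTop : Filter ℕ)
  choose φ hφW hφ using fun k : ℕ =>
    hW.exists_norm_sub_le hKbdd hlip (Nat.one_div_pos_of_nat (n := k))
  have hφK : ∀ k, φ k ∈ K := fun k => hW.subset (hφW k)
  have hφB : ∀ k, ‖φ k‖ ≤ B := fun k => hB _ (hφK k)
  have hJφ : ∀ k, ‖J (φ k)‖ ≤ α * B := fun k =>
    (norm_ell1Adjoint_le e A _).trans (mul_le_mul_of_nonneg_left (hφB k) (norm_nonneg _))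
  have happrox : Tendsto (fun k => ‖φ k - T (φ k)‖) U (𝓝 0) :=
    squeeze_zero (fun k => norm_nonneg _) hφ
      (tendsto_one_div_add_atTop_nhds_zero_nat.mono_left (Ultrafilter.of_le _))
  obtain ⟨η', c, hη', hc⟩ := ell1.exists_tendsto_apply_and_tendsto_norm_sub U hJφ
  have hc0 : 0 ≤ c := ge_of_tendsto' hc fun k => norm_nonneg _
  have hadd := ell1.tendsto_norm_sub_of_tendsto_apply hη' hc
  have hasym := tendsto_asymptoticDist (U := U) hφB
  obtain ⟨φL, hφLK, hφL⟩ := exists_tendsto_apply_of_isCompact_wsDual hK U hφK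
  have hφLη : ‖J φL - η'‖ ≤ r * c := norm_ell1Adjoint_sub_le_of_tendsto e A hr hbasis hφL hη' hc
  refine ⟨{ψ ∈ K | asymptoticDist U φ ψ ≤ β * ((1 + r) * c)}, η', c,
    isClosedConvexInvariant_asymptoticDist_le (isClosed_of_isCompact_wsDual hK) hKconv hKT hlip
      hφB hφK happrox hφLK ?_, fun ψ hψ => ?_, hc0, ?_⟩
  · have h := le_of_tendsto_of_tendsto' (hasym φL) ((hadd (J φL)).const_mul β) fun k => by
      simpa [J, dist_eq_norm, norm_sub_rev (J φL)] using
        (antilipschitz_ell1Adjoint e A).le_mul_dist (φ k) φL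
    exact h.trans (by gcongr; linarith)
  · have h := le_of_tendsto_of_tendsto' (hadd (J ψ)) ((hasym ψ).const_mul α) fun k => by
      simpa [J, norm_sub_rev (J ψ)] using norm_ell1Adjoint_le e A (φ k - ψ)
    have hψα : α * asymptoticDist U φ ψ ≤ α * (β * ((1 + r) * c)) := by gcongr; exact hψ.2
    rw [mem_closedBall, dist_eq_norm]
    nlinarith
  · have h := le_of_tendsto' (hadd η) fun k => by
      simpa [dist_eq_norm, norm_sub_rev] using hWG (hφW k)
    rw [dist_eq_norm]
    linarith

lemma exists_seq_mapsTo_shrinking_closedBall [CompleteSpace Y] (hr : 0 ≤ r)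
    (hbasis : BasisPairingLimsupLE e r)
    {K : Set (StrongDual ℝ Y)} {T : StrongDual ℝ Y → StrongDual ℝ Y}
    (hK : @IsCompact _ (wsDual Y) K) (hKne : K.Nonempty) (hKconv : Convex ℝ K)
    (hKT : MapsTo T K K) (hlip : LipschitzOnWith 1 T K) {κ : ℝ}
    (hκ : ‖(A : X →L[ℝ] Y)‖ * ‖(A.symm : Y →L[ℝ] X)‖ * (1 + r) - 1 ≤ κ) (hκ0 : 0 ≤ κ) :
    ∃ (W : ℕ → Set (StrongDual ℝ Y)) (η : ℕ → ell1) (G : ℕ → ℝ), ∀ j,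
      IsClosedConvexInvariant K T (W j) ∧ MapsTo (ell1Adjoint e A) (W j) (closedBall (η j) (G j)) ∧
      dist (η j) (η (j + 1)) ≤ G j ∧ G (j + 1) ≤ κ * G j := by
  obtain ⟨B, hB⟩ := (isBounded_of_isCompact_wsDual hK).exists_norm_le
  have hK₀ : MapsTo (ell1Adjoint e A) K (closedBall 0 (‖(A : X →L[ℝ] Y)‖ * B)) := fun ψ hψ => by
    simpa using (norm_ell1Adjoint_le e A ψ).trans (by gcongr; exact hB ψ hψ)
  obtain ⟨s, hs⟩ := exists_seq_of_forall_exists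
    (p := fun s : Set (StrongDual ℝ Y) × ell1 × ℝ =>
      IsClosedConvexInvariant K T s.1 ∧ MapsTo (ell1Adjoint e A) s.1 (closedBall s.2.1 s.2.2))
    (R := fun s s' => dist s.2.1 s'.2.1 ≤ s.2.2 ∧ s'.2.2 ≤ κ * s.2.2)
    (a := (K, 0, ‖(A : X →L[ℝ] Y)‖ * B))
    ⟨⟨subset_rfl, hKne, hKconv, isClosed_of_isCompact_wsDual hK, hKT⟩, hK₀⟩ fun s hs => by
      obtain ⟨W', η', c, hW', hW'η, hc0, hlink⟩ :=
        exists_mapsTo_smaller_closedBall e A hr hbasis hK hKconv hKT hlip hs.1 hs.2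
      have hc : c ≤ s.2.2 := by linarith [dist_nonneg (x := s.2.1) (y := η')]
      exact ⟨(W', η', κ * c), ⟨hW', hW'η.mono_right (closedBall_subset_closedBall
        (mul_le_mul_of_nonneg_right hκ hc0))⟩, by linarith, mul_le_mul_of_nonneg_left hc hκ0⟩
  exact ⟨fun j => (s j).1, fun j => (s j).2.1, fun j => (s j).2.2,
    fun j => ⟨(hs j).1.1, (hs j).1.2, (hs j).2.1, (hs j).2.2⟩⟩

end Shrink

theorem stmt13_general (X : Type*) [NormedAddCommGroup X] [NormedSpace ℝ X]
    (e : StrongDual ℝ X ≃ₗᵢ[ℝ] ell1) (r : ℝ) (hr0 : 0 ≤ r)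
    (hlim : ∀ y : ell1,
      y ∈ @closure _ (wstar X e) ({z : ell1 | ∃ i, z = basisv i ∨ z = -basisv i} \ {y}) →
      ‖y‖ ≤ r)
    (Y : Type*) [NormedAddCommGroup Y] [NormedSpace ℝ Y] [CompleteSpace Y]
    (A : X ≃L[ℝ] Y)
    (hA : ‖(A : X →L[ℝ] Y)‖ * ‖(A.symm : Y →L[ℝ] X)‖ < 2 / (1 + r))
    (K : Set (StrongDual ℝ Y)) (hK : K.Nonempty) (hconv : Convex ℝ K)
    (hcpt : @IsCompact _ (wsDual Y) K)
    (T : StrongDual ℝ Y → StrongDual ℝ Y) (hT : Set.MapsTo T K K)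
    (hnonexp : ∀ x ∈ K, ∀ y ∈ K, ‖T x - T y‖ ≤ ‖x - y‖) :
    ∃ x ∈ K, T x = x := by
  have hlip : LipschitzOnWith 1 T K :=
    LipschitzOnWith.of_dist_le_mul fun x hx y hy => by simpa [dist_eq_norm] using hnonexp x hx y hy
  have hKbdd := isBounded_of_isCompact_wsDual hcpt
  set κ := max (‖(A : X →L[ℝ] Y)‖ * ‖(A.symm : Y →L[ℝ] X)‖ * (1 + r) - 1) 0
  have hκ1 : κ < 1 := max_lt (by linarith [(lt_div_iff₀ (by linarith : 0 < 1 + r)).1 hA]) one_pos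
  obtain ⟨W, η, G, hs⟩ := exists_seq_mapsTo_shrinking_closedBall e A hr0
    (basisPairingLimsupLE_of_limitPoints_norm_le e hlim) hcpt hK hconv hT hlip
    (le_max_left _ _) (le_max_right _ _)
  choose χ hχW hχ using fun j : ℕ =>
    (hs j).1.exists_norm_sub_le hKbdd hlip (Nat.one_div_pos_of_nat (n := j))
  have hcauchy : CauchySeq χ :=
    cauchySeq_of_antilipschitzWith (antilipschitz_ell1Adjoint e A) (le_max_right _ _) hκ1
      (fun j => (hs j).2.1 (hχW j)) (fun j => (hs j).2.2.1) (fun j => (hs j).2.2.2)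
  exact exists_fixedPoint_of_cauchySeq (isClosed_of_isCompact_wsDual hcpt) hlip
    (fun j => (hs j).1.subset (hχW j)) hcauchy
    (squeeze_zero (fun j => dist_nonneg) (fun j => (dist_eq_norm _ _).trans_le (hχ j))
      tendsto_one_div_add_atTop_nhds_zero_nat)

theorem stmt13 (X : Type*) [NormedAddCommGroup X] [NormedSpace ℝ X] [CompleteSpace X]
    (e : StrongDual ℝ X ≃ₗᵢ[ℝ] ell1) (r : ℝ) (hr0 : 0 ≤ r) (hr1 : r < 1)
    (hlim : ∀ y : ell1,
      y ∈ @closure _ (wstar X e) ({z : ell1 | ∃ i, z = basisv i ∨ z = -basisv i} \ {y}) →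
      ‖y‖ ≤ r)
    (Y : Type*) [NormedAddCommGroup Y] [NormedSpace ℝ Y] [CompleteSpace Y]
    (A : X ≃L[ℝ] Y)
    (hA : ‖(A : X →L[ℝ] Y)‖ * ‖(A.symm : Y →L[ℝ] X)‖ < 2 / (1 + r))
    (K : Set (StrongDual ℝ Y)) (hK : K.Nonempty) (hconv : Convex ℝ K)
    (hcpt : @IsCompact _ (wsDual Y) K)
    (T : StrongDual ℝ Y → StrongDual ℝ Y) (hT : Set.MapsTo T K K)
    (hnonexp : ∀ x ∈ K, ∀ y ∈ K, ‖T x - T y‖ ≤ ‖x - y‖) :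
    ∃ x ∈ K, T x = x :=
  stmt13_general X e r hr0 hlim Y A hA K hK hconv hcpt T hT hnonexp
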